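/- Let n ≥ 2 and let λ = (λ₁, …, λₙ) ∈ ℝⁿ satisfy Θ(λ) > (n−2)·π/2. Then Σ_{i=1}^{n} λᵢ > 0. -/
import Mathlib


open Real

lemma pair_pos (n : ℕ) (hn : 2 ≤ n) (l : Fin n → ℝ)
    (hΘ : ((n : ℝ) - 2) * (π / 2) < ∑ i, Real.arctan (l i))
    (i j : Fin n) (hij : i ≠ j) : 0 < l i + l j := by
  have hrest : ∑ k ∈ Finset.univ \ {i, j}, Real.arctan (l k) ≤ ((n : ℝ) - 2) * (π / 2) := by
    have hcard : (Finset.univ \ ({i, j} : Finset (Fin n))).card = n - 2 := by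
      rw [Finset.card_sdiff_of_subset (Finset.subset_univ _), Finset.card_univ, Fintype.card_fin,
        Finset.card_insert_of_notMem (by simpa using hij), Finset.card_singleton]
    calc ∑ k ∈ Finset.univ \ {i, j}, Real.arctan (l k)
        ≤ (Finset.univ \ ({i, j} : Finset (Fin n))).card • (π / 2) :=
          Finset.sum_le_card_nsmul _ _ _ (fun k _ => (Real.arctan_lt_pi_div_two _).le)
      _ = ((n : ℝ) - 2) * (π / 2) := by
          rw [hcard, nsmul_eq_mul, Nat.cast_sub hn]; push_cast; ring
  have hsplit : ∑ k, Real.arctan (l k)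
      = ∑ k ∈ Finset.univ \ {i, j}, Real.arctan (l k)
        + (Real.arctan (l i) + Real.arctan (l j)) := by
    rw [← Finset.sum_sdiff (Finset.subset_univ ({i, j} : Finset (Fin n))),
      Finset.sum_pair hij]
  have h0 : 0 < Real.arctan (l i) + Real.arctan (l j) := by
    rw [hsplit] at hΘ; linarith
  by_contra h
  push_neg at h
  have hle : Real.arctan (l i) ≤ Real.arctan (-l j) :=
    Real.arctan_strictMono.monotone (by linarith)
  rw [Real.arctan_neg] at hle
  linarith

/-- If `Θ(λ) > (n-2)π/2` then `Σ λᵢ > 0`. -/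
theorem stmt_6 (n : ℕ) (hn : 2 ≤ n) (l : Fin n → ℝ)
    (hΘ : ((n : ℝ) - 2) * (π / 2) < ∑ i, Real.arctan (l i)) :
    0 < ∑ i, l i := by
  haveI : Nonempty (Fin n) := Fin.pos_iff_nonempty.mp (by omega)
  have hne : (Finset.univ : Finset (Fin n)).Nonempty := Finset.univ_nonempty
  obtain ⟨j, -, hj⟩ := Finset.exists_min_image Finset.univ l hne
  by_cases hjneg : l j < 0
  · -- every other entry exceeds -l j
    have hcard : (Finset.univ \ ({j} : Finset (Fin n))).card = n - 1 := by
      rw [Finset.card_sdiff_of_subset (Finset.subset_univ _), Finset.card_univ, Fintype.card_fin,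
        Finset.card_singleton]
    have hne' : (Finset.univ \ ({j} : Finset (Fin n))).Nonempty := by
      rw [← Finset.card_pos, hcard]; omega
    have hsum : (Finset.univ \ ({j} : Finset (Fin n))).card • (-l j)
        < ∑ i ∈ Finset.univ \ {j}, l i := by
      rw [← Finset.sum_const]
      apply Finset.sum_lt_sum_of_nonempty hne'
      intro i hi
      have hij : i ≠ j := by simpa using (Finset.mem_sdiff.mp hi).2
      have := pair_pos n hn l hΘ i j hij
      linarith
    have hsplit : ∑ i, l i = ∑ i ∈ Finset.univ \ {j}, l i + l j := by
      rw [← Finset.sum_sdiff (Finset.subset_univ ({j} : Finset (Fin n))),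
        Finset.sum_singleton]
    rw [hcard, nsmul_eq_mul] at hsum
    have hcast : (1 : ℝ) ≤ ((n - 1 : ℕ) : ℝ) := by
      have : 1 ≤ n - 1 := by omega
      exact_mod_cast this
    nlinarith
  · -- all entries nonnegative; one is positive
    push_neg at hjneg
    have hpos : ∃ i ∈ Finset.univ, 0 < l i := by
      by_contra hc
      push_neg at hc
      have hsum0 : ∑ i, Real.arctan (l i) ≤ 0 := by
        apply Finset.sum_nonpos
        intro i _
        have h1 : l i ≤ 0 := hc i (Finset.mem_univ i)
        have := Real.arctan_strictMono.monotone h1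
        simpa [Real.arctan_zero] using this
      have hge : (0 : ℝ) ≤ ((n : ℝ) - 2) * (π / 2) := by
        have : (2 : ℝ) ≤ n := by exact_mod_cast hn
        have := Real.pi_pos
        nlinarith
      linarith
    obtain ⟨i, -, hi⟩ := hpos
    exact Finset.sum_pos' (fun k _ => le_trans hjneg (hj k (Finset.mem_univ k))) ⟨i, Finset.mem_univ i, hi⟩
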